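/- Let k > 0 and α ∈ ℝ² with |αₙ| ≠ k for all n ∈ ℤ², and let (Ẽₙ)_{n∈ℤ²} ⊂ ℂ³ be tangential vectors (e₃·Ẽₙ = 0) with Σₙ (1+|αₙ|²)^{−1/2}(|Ẽₙ|² + |αₙ·Ẽₙ|²) < ∞. Then the series ⟨RẼ,Ẽ⟩ := 4π² Σ_{n∈ℤ²} R̂ₙ · conj(Ẽₙ), with R̂ₙ = −(1/(iβₙ))[k²Ẽₙ − (αₙ·Ẽₙ)αₙ], converges absolutely, and its real part is given by Re ⟨RẼ,Ẽ⟩ = 4π² Σ_{n∈ℤ²∖P} (1/|βₙ|) [ k²|Ẽₙ|² − |αₙ·Ẽₙ|² ]. -/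

import Mathlib

open scoped Real

/-- `|αₙ|` for `αₙ = (α₁+n₁, α₂+n₂, 0)`. -/
noncomputable def alphaNorm (α : ℝ × ℝ) (n : ℤ × ℤ) : ℝ :=
  Real.sqrt ((α.1 + (n.1 : ℝ))^2 + (α.2 + (n.2 : ℝ))^2)

/-- The vector `αₙ = (α₁+n₁, α₂+n₂, 0)` viewed in `ℂ³`. -/
noncomputable def alphaVec (α : ℝ × ℝ) (n : ℤ × ℤ) : Fin 3 → ℂ :=
  ![((α.1 + (n.1 : ℝ) : ℝ) : ℂ), ((α.2 + (n.2 : ℝ) : ℝ) : ℂ), 0]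

/-- The vertical wavenumbers `βₙ` of the Rayleigh expansion:
`βₙ = (k² − |αₙ|²)^{1/2}` if `|αₙ| < k` and `βₙ = i(|αₙ|² − k²)^{1/2}` if `|αₙ| > k`. -/
noncomputable def betaN (k : ℝ) (α : ℝ × ℝ) (n : ℤ × ℤ) : ℂ :=
  if alphaNorm α n < k then (Real.sqrt (k^2 - (alphaNorm α n)^2) : ℂ)
  else Complex.I * (Real.sqrt ((alphaNorm α n)^2 - k^2) : ℂ)

/-- Bilinear dot product on `ℂ³` (no conjugation). -/
def cdot (a b : Fin 3 → ℂ) : ℂ := a 0 * b 0 + a 1 * b 1 + a 2 * b 2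

/-- Hermitian pairing `a · conj b` on `ℂ³`. -/
noncomputable def hpair (a b : Fin 3 → ℂ) : ℂ := ∑ j : Fin 3, a j * (starRingEnd ℂ) (b j)

/-- Squared Euclidean norm `|v|² = Σⱼ|vⱼ|²` of `v ∈ ℂ³`. -/
noncomputable def enormSq (v : Fin 3 → ℂ) : ℝ := ∑ j : Fin 3, ‖v j‖^2

/-- The Fourier symbol `R̂ₙ = −(1/(iβₙ))[k²Ẽₙ − (αₙ·Ẽₙ)αₙ]` of the transparent
boundary (Dirichlet-to-Neumann) operator `R`. -/
noncomputable def Rsymb (k : ℝ) (α : ℝ × ℝ) (n : ℤ × ℤ) (En : Fin 3 → ℂ) : Fin 3 → ℂ :=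
  fun j => -(1 / (Complex.I * betaN k α n)) *
    ((k : ℂ)^2 * En j - cdot (alphaVec α n) En * alphaVec α n j)

/-- The Sobolev weight `(1+|αₙ|²)^{−1/2}`. -/
noncomputable def sw (α : ℝ × ℝ) (n : ℤ × ℤ) : ℝ := 1 / Real.sqrt (1 + (alphaNorm α n)^2)

/-!
Put `cₙ = k²|Ẽₙ|² − |αₙ·Ẽₙ|²`. Since `αₙ` is real, `R̂ₙ·conj Ẽₙ = −cₙ/(iβₙ)`. For `n ∈ P`
the number `βₙ` is real, so this term is purely imaginary; for `n ∉ P` one has `iβₙ = −|βₙ|`,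
so it is the real number `cₙ/|βₙ|`. Absolute convergence follows by comparison: for all but
finitely many `n`, `1/|βₙ| ≤ (k²+2)^{1/2}(1+|αₙ|²)^{−1/2}` and `|cₙ| ≤ max(k²,1)(|Ẽₙ|² + |αₙ·Ẽₙ|²)`.
-/

lemma finite_setOf_sq_add_intCast_lt (x R : ℝ) : {m : ℤ | (x + m) ^ 2 < R}.Finite := by
  refine (Set.finite_Icc ⌈-x - √R⌉ ⌊√R - x⌋).subset fun m hm => ?_
  have hlt : |x + m| < √R := by
    rw [← Real.sqrt_sq_eq_abs]
    exact Real.sqrt_lt_sqrt (sq_nonneg _) hm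
  obtain ⟨hlo, hhi⟩ := abs_lt.mp hlt
  exact ⟨Int.ceil_le.mpr (by linarith), Int.le_floor.mpr (by linarith)⟩

lemma alphaNorm_sq (α : ℝ × ℝ) (n : ℤ × ℤ) :
    alphaNorm α n ^ 2 = (α.1 + n.1) ^ 2 + (α.2 + n.2) ^ 2 :=
  Real.sq_sqrt (by positivity)

lemma eventually_cofinite_le_alphaNorm_sq (α : ℝ × ℝ) (R : ℝ) :
    ∀ᶠ n in Filter.cofinite, R ≤ alphaNorm α n ^ 2 := by
  refine Filter.eventually_cofinite.mpr <|
    ((finite_setOf_sq_add_intCast_lt α.1 R).prod (finite_setOf_sq_add_intCast_lt α.2 R)).subset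
      fun n hn => ?_
  simp only [Set.mem_ofPred_eq, Set.mem_prod, not_le, alphaNorm_sq] at hn ⊢
  exact ⟨by nlinarith [sq_nonneg (α.2 + n.2)], by nlinarith [sq_nonneg (α.1 + n.1)]⟩

lemma conj_alphaVec (α : ℝ × ℝ) (n : ℤ × ℤ) (j : Fin 3) :
    starRingEnd ℂ (alphaVec α n j) = alphaVec α n j := by
  fin_cases j <;> simp [alphaVec]

lemma hpair_Rsymb (k : ℝ) (α : ℝ × ℝ) (n : ℤ × ℤ) (E : Fin 3 → ℂ) :
    hpair (Rsymb k α n E) E = -(1 / (Complex.I * betaN k α n)) *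
      ((k ^ 2 * enormSq E - ‖cdot (alphaVec α n) E‖ ^ 2 : ℝ) : ℂ) := by
  simp only [hpair, Rsymb, enormSq, Fin.sum_univ_three, cdot, Complex.ofReal_sub,
    Complex.ofReal_mul, Complex.ofReal_add, Complex.ofReal_pow, ← Complex.mul_conj', map_add,
    map_mul, conj_alphaVec]
  ring

lemma norm_hpair_Rsymb (k : ℝ) (α : ℝ × ℝ) (n : ℤ × ℤ) (E : Fin 3 → ℂ) :
    ‖hpair (Rsymb k α n E) E‖ =
      1 / ‖betaN k α n‖ * |k ^ 2 * enormSq E - ‖cdot (alphaVec α n) E‖ ^ 2| := by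
  rw [hpair_Rsymb, norm_mul, Complex.norm_real, Real.norm_eq_abs]
  simp

lemma re_hpair_Rsymb_of_lt {k : ℝ} {α : ℝ × ℝ} {n : ℤ × ℤ} (h : alphaNorm α n < k)
    (E : Fin 3 → ℂ) : (hpair (Rsymb k α n E) E).re = 0 := by
  rw [hpair_Rsymb, betaN, if_pos h]
  generalize √(k ^ 2 - alphaNorm α n ^ 2) = b
  generalize k ^ 2 * enormSq E - ‖cdot (alphaVec α n) E‖ ^ 2 = c
  simp [Complex.mul_re]

lemma hpair_Rsymb_of_not_lt {k : ℝ} {α : ℝ × ℝ} {n : ℤ × ℤ} (h : ¬ alphaNorm α n < k)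
    (E : Fin 3 → ℂ) : hpair (Rsymb k α n E) E =
      ((1 / ‖betaN k α n‖ * (k ^ 2 * enormSq E - ‖cdot (alphaVec α n) E‖ ^ 2) : ℝ) : ℂ) := by
  rw [hpair_Rsymb, betaN, if_neg h]
  have hb := Real.sqrt_nonneg (alphaNorm α n ^ 2 - k ^ 2)
  generalize √(alphaNorm α n ^ 2 - k ^ 2) = b at hb ⊢
  generalize k ^ 2 * enormSq E - ‖cdot (alphaVec α n) E‖ ^ 2 = c
  simp [← mul_assoc, abs_of_nonneg hb]

lemma enormSq_nonneg (v : Fin 3 → ℂ) : 0 ≤ enormSq v := by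
  unfold enormSq
  positivity

lemma sw_nonneg (α : ℝ × ℝ) (n : ℤ × ℤ) : 0 ≤ sw α n := by
  unfold sw
  positivity

lemma one_div_norm_betaN_le {k : ℝ} {α : ℝ × ℝ} {n : ℤ × ℤ} (h : k ^ 2 + 1 ≤ alphaNorm α n ^ 2) :
    1 / ‖betaN k α n‖ ≤ √(k ^ 2 + 2) * sw α n := by
  have ha : 0 ≤ alphaNorm α n := Real.sqrt_nonneg _
  have hkn : ¬ alphaNorm α n < k := fun hlt => by nlinarith
  have hd : 1 ≤ alphaNorm α n ^ 2 - k ^ 2 := by linarith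
  rw [betaN, if_neg hkn, norm_mul, Complex.norm_I, one_mul, Complex.norm_real,
    Real.norm_of_nonneg (Real.sqrt_nonneg _), sw, mul_one_div,
    div_le_div_iff₀ (Real.sqrt_pos.mpr (by linarith)) (Real.sqrt_pos.mpr (by positivity)),
    one_mul, ← Real.sqrt_mul (by positivity)]
  exact Real.sqrt_le_sqrt (by nlinarith [mul_nonneg (sq_nonneg k) (sub_nonneg.mpr hd)])

lemma abs_mul_sub_le_max_mul_add {a x y : ℝ} (ha : 0 ≤ a) (hx : 0 ≤ x) (hy : 0 ≤ y) :
    |a * x - y| ≤ max a 1 * (x + y) := by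
  have h₁ := le_max_left a 1
  have h₂ := le_max_right a 1
  exact abs_le.mpr ⟨by nlinarith, by nlinarith⟩

lemma norm_hpair_Rsymb_le {k : ℝ} {α : ℝ × ℝ} {n : ℤ × ℤ} (h : k ^ 2 + 1 ≤ alphaNorm α n ^ 2)
    (E : Fin 3 → ℂ) : ‖hpair (Rsymb k α n E) E‖ ≤
      √(k ^ 2 + 2) * max (k ^ 2) 1 * (sw α n * (enormSq E + ‖cdot (alphaVec α n) E‖ ^ 2)) := by
  rw [norm_hpair_Rsymb]
  calc _ ≤ √(k ^ 2 + 2) * sw α n * (max (k ^ 2) 1 * (enormSq E + ‖cdot (alphaVec α n) E‖ ^ 2)) :=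
        mul_le_mul (one_div_norm_betaN_le h)
          (abs_mul_sub_le_max_mul_add (sq_nonneg k) (enormSq_nonneg E) (sq_nonneg _))
          (abs_nonneg _) (mul_nonneg (Real.sqrt_nonneg _) (sw_nonneg α n))
    _ = _ := by ring

theorem re_pairing_formula_general (k : ℝ) (α : ℝ × ℝ)
    (Et : ℤ × ℤ → Fin 3 → ℂ)
    (hsum : Summable fun n : ℤ × ℤ =>
      sw α n * (enormSq (Et n) + ‖cdot (alphaVec α n) (Et n)‖^2)) :
    (Summable fun n : ℤ × ℤ => ‖hpair (Rsymb k α n (Et n)) (Et n)‖) ∧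
    (Summable fun n : {n : ℤ × ℤ // ¬ alphaNorm α n < k} =>
      (1 / ‖betaN k α n.1‖) *
        (k^2 * enormSq (Et n.1) - ‖cdot (alphaVec α n.1) (Et n.1)‖^2)) ∧
    ((4 * (π : ℂ)^2) * ∑' n : ℤ × ℤ, hpair (Rsymb k α n (Et n)) (Et n)).re
      = 4 * π^2 * ∑' n : {n : ℤ × ℤ // ¬ alphaNorm α n < k},
          (1 / ‖betaN k α n.1‖) *
            (k^2 * enormSq (Et n.1) - ‖cdot (alphaVec α n.1) (Et n.1)‖^2) := by
  have hnorm : Summable fun n => ‖hpair (Rsymb k α n (Et n)) (Et n)‖ :=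
    Summable.of_norm_bounded_eventually (hsum.mul_left _) <|
      (eventually_cofinite_le_alphaNorm_sq α (k ^ 2 + 1)).mono fun n hn => by
        simpa only [norm_norm] using norm_hpair_Rsymb_le hn (Et n)
  refine ⟨hnorm, ?_, ?_⟩
  · refine Summable.of_norm_bounded (hnorm.subtype {n | ¬ alphaNorm α n < k}) fun n => ?_
    rw [Function.comp_apply, hpair_Rsymb_of_not_lt n.2, Complex.norm_real]
  · have hsupp : Function.support (fun n => (hpair (Rsymb k α n (Et n)) (Et n)).re) ⊆
        {n | ¬ alphaNorm α n < k} := fun n hn hlt => hn (re_hpair_Rsymb_of_lt hlt (Et n))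
    rw [show (4 * (π : ℂ) ^ 2) = ((4 * π ^ 2 : ℝ) : ℂ) by push_cast; ring, Complex.re_ofReal_mul,
      Complex.re_tsum hnorm.of_norm, ← tsum_subtype_eq_of_support_subset hsupp]
    exact congrArg _ <| tsum_congr fun n => by rw [hpair_Rsymb_of_not_lt n.2, Complex.ofReal_re]

/-- Absolute convergence of the D-to-N pairing `⟨RẼ,Ẽ⟩ = 4π² Σₙ R̂ₙ·conj(Ẽₙ)` for
tangential `Ẽₙ` with finite `H_t^{-1/2}(div)` norm, and the formula
`Re⟨RẼ,Ẽ⟩ = 4π² Σ_{n∉P} (1/|βₙ|)[k²|Ẽₙ|² − |αₙ·Ẽₙ|²]` for its real part. -/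
theorem re_pairing_formula (k : ℝ) (hk : 0 < k) (α : ℝ × ℝ)
    (hwood : ∀ n : ℤ × ℤ, alphaNorm α n ≠ k)
    (Et : ℤ × ℤ → Fin 3 → ℂ) (htan : ∀ n, Et n 2 = 0)
    (hsum : Summable fun n : ℤ × ℤ =>
      sw α n * (enormSq (Et n) + ‖cdot (alphaVec α n) (Et n)‖^2)) :
    (Summable fun n : ℤ × ℤ => ‖hpair (Rsymb k α n (Et n)) (Et n)‖) ∧
    (Summable fun n : {n : ℤ × ℤ // ¬ alphaNorm α n < k} =>
      (1 / ‖betaN k α n.1‖) *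
        (k^2 * enormSq (Et n.1) - ‖cdot (alphaVec α n.1) (Et n.1)‖^2)) ∧
    ((4 * (π : ℂ)^2) * ∑' n : ℤ × ℤ, hpair (Rsymb k α n (Et n)) (Et n)).re
      = 4 * π^2 * ∑' n : {n : ℤ × ℤ // ¬ alphaNorm α n < k},
          (1 / ‖betaN k α n.1‖) *
            (k^2 * enormSq (Et n.1) - ‖cdot (alphaVec α n.1) (Et n.1)‖^2) :=
  re_pairing_formula_general k α Et hsum
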